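/- For all n ∈ ℕ and all even k with 2 ≤ k ≤ n-1: ∑_{s ≥ 0, n-2s ≥ k} B{n, n-2s} · (n-2s-1)² · A[n-2s-2, k-2] = π^(n-k)/(n-k)!, where B{n,m} := (1/((m-1)!(n-m)!))∫₀^π (sin x)^(m-1) x^(n-m) dx for 1 ≤ m ≤ n, B{n,0} := π^n/n!, and A[m,j] := [x^j]Q_m(x) for even j ≥ 0 with Q_m(x) := ∏_{i ∈ {1,…,m-1}, i ≢ m mod 2}(1+i²x²), A[m,j] := 0 for j < 0 or j > m. -/

import Mathlib

open Real Polynomial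

/-- The polynomial `Q_n(x) = ∏_{j ∈ {1,…,n-1}, j ≢ n (mod 2)} (1 + j² x²)`. -/
noncomputable def Q (n : ℕ) : Polynomial ℝ :=
  ∏ j ∈ (Finset.Icc 1 (n - 1)).filter (fun j => j % 2 ≠ n % 2),
    (1 + Polynomial.C ((j : ℝ) ^ 2) * Polynomial.X ^ 2)

/-- `A[n,k] := [x^k] Q_n(x)` for natural `k`. -/
noncomputable def A (n k : ℕ) : ℝ := (Q n).coeff k

/-- The normalized sine-moment integral `B{n,k}` from the paper, with
`B{n,0} := π^n/n!` and `B{n,k} := 0` for `k > n`. -/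
noncomputable def B (n k : ℕ) : ℝ :=
  if k = 0 then π ^ n / (n.factorial : ℝ)
  else if n < k then 0
  else (1 / (((k - 1).factorial : ℝ) * ((n - k).factorial : ℝ))) *
    ∫ x in (0:ℝ)..π, Real.sin x ^ (k - 1) * x ^ (n - k)

/-! Both sides obey dual three-term recurrences. Integrating by parts twice gives
`B{n,m-2} - B{n,m} = (m-1)² B{n+2,m}`, and `Q_{m+2} = Q_m (1 + (m+1)² x²)` gives
`A[m+2,j+2] - A[m,j+2] = (m+1)² A[m,j]`. Inserting the first into the sum for `(n+2, k+2)` and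
summing by parts produces the second inside the sum for `(n, k)`, so induction on `k` reduces
everything to `k = 2`, where the sum telescopes to `B{n-2,0}` or `B{n-2,1}`, both equal to
`π^(n-2)/(n-2)!`. -/

open intervalIntegral Nat

noncomputable def sinMoment (a b : ℕ) : ℝ := ∫ x in (0:ℝ)..π, sin x ^ a * x ^ b

theorem intervalIntegrable_sin_pow_mul_pow (a b : ℕ) :
    IntervalIntegrable (fun x => sin x ^ a * x ^ b) MeasureTheory.volume 0 π :=
  (by fun_prop : Continuous fun x => sin x ^ a * x ^ b).intervalIntegrable _ _

theorem sinMoment_add_two (a b : ℕ) :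
    ((a : ℝ) + 2) ^ 2 * sinMoment (a + 2) b =
      ((a : ℝ) + 2) * (a + 1) * sinMoment a b - b * (b - 1) * sinMoment (a + 2) (b - 2) := by
  have hderiv : ∀ x ∈ Set.uIcc 0 π, HasDerivAt
      (fun x => -((a : ℝ) + 2) * (sin x ^ (a + 1) * cos x * x ^ b)
        + b * (sin x ^ (a + 2) * x ^ (b - 1)))
      (((a : ℝ) + 2) ^ 2 * (sin x ^ (a + 2) * x ^ b)
        - ((a : ℝ) + 2) * (a + 1) * (sin x ^ a * x ^ b)
        + b * (b - 1) * (sin x ^ (a + 2) * x ^ (b - 2))) x := by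
    intro x _
    have h := (((((hasDerivAt_sin x).fun_pow (a + 1)).fun_mul (hasDerivAt_cos x)).fun_mul
      (hasDerivAt_pow b x)).const_mul (-((a : ℝ) + 2))).fun_add
      ((((hasDerivAt_sin x).fun_pow (a + 2)).fun_mul (hasDerivAt_pow (b - 1) x)).const_mul
        (b : ℝ))
    refine h.congr_deriv ?_
    have hb : (b : ℝ) * ((b - 1 : ℕ) : ℝ) = b * (b - 1) := by rcases b with _ | b <;> simp
    rw [show a + 2 - 1 = a + 1 by omega, Nat.add_sub_cancel, Nat.sub_sub]
    push_cast
    linear_combination (sin x ^ (a + 2) * x ^ (b - 2)) * hb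
      - ((a : ℝ) + 2) * (a + 1) * sin x ^ a * x ^ b * cos_sq' x
  have hint := intervalIntegrable_sin_pow_mul_pow
  have h := integral_eq_sub_of_hasDerivAt hderiv
    ((((hint _ _).const_mul _).sub ((hint _ _).const_mul _)).add ((hint _ _).const_mul _))
  rw [integral_add (((hint _ _).const_mul _).sub ((hint _ _).const_mul _))
      ((hint _ _).const_mul _), integral_sub ((hint _ _).const_mul _) ((hint _ _).const_mul _),
    integral_const_mul, integral_const_mul, integral_const_mul] at h
  simp only [sin_zero, sin_pi, ne_eq, Nat.add_eq_zero_iff, OfNat.ofNat_ne_zero, one_ne_zero,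
    and_false, not_false_eq_true, zero_pow, zero_mul, mul_zero, add_zero, sub_self] at h
  unfold sinMoment
  linear_combination h

-- The case `a = -1` of `sinMoment_add_two`; `0 ^ b` is the boundary term `cos 0 * 0 ^ b`.
theorem sinMoment_one (b : ℕ) :
    sinMoment 1 b + b * (b - 1) * sinMoment 1 (b - 2) = π ^ b + 0 ^ b := by
  have hderiv : ∀ x ∈ Set.uIcc 0 π,
      HasDerivAt (fun x => -(cos x * x ^ b) + b * (sin x * x ^ (b - 1)))
      (sin x ^ 1 * x ^ b + b * (b - 1) * (sin x ^ 1 * x ^ (b - 2))) x := by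
    intro x _
    have h := (((hasDerivAt_cos x).fun_mul (hasDerivAt_pow b x)).fun_neg).fun_add
      (((hasDerivAt_sin x).fun_mul (hasDerivAt_pow (b - 1) x)).const_mul (b : ℝ))
    refine h.congr_deriv ?_
    have hb : (b : ℝ) * ((b - 1 : ℕ) : ℝ) = b * (b - 1) := by rcases b with _ | b <;> simp
    rw [Nat.sub_sub]
    linear_combination (sin x * x ^ (b - 2)) * hb
  have hint := intervalIntegrable_sin_pow_mul_pow
  have h := integral_eq_sub_of_hasDerivAt hderiv ((hint _ _).add ((hint _ _).const_mul _))
  rw [integral_add (hint _ _) ((hint _ _).const_mul _), integral_const_mul] at h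
  simpa [sinMoment] using h

theorem sinMoment_zero (b : ℕ) : sinMoment 0 b = π ^ (b + 1) / (b + 1) := by
  simp [sinMoment, integral_pow]

theorem B_zero (n : ℕ) : B n 0 = π ^ n / n ! := by
  simp [B]

theorem B_eq_zero_of_lt {n m : ℕ} (h : n < m) : B n m = 0 := by
  rw [B, if_neg (by omega), if_pos h]

theorem B_eq_sinMoment {n m : ℕ} (hm : m ≠ 0) (hmn : m ≤ n) :
    B n m = sinMoment (m - 1) (n - m) / ((m - 1)! * (n - m)!) := by
  rw [B, if_neg hm, if_neg (by omega), one_div_mul_eq_div, sinMoment]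

theorem B_one {n : ℕ} (hn : n ≠ 0) : B n 1 = B n 0 := by
  obtain ⟨b, rfl⟩ := Nat.exists_eq_add_one_of_ne_zero hn
  rw [B_eq_sinMoment one_ne_zero (by omega), B_zero, Nat.sub_self, Nat.add_sub_cancel,
    sinMoment_zero, factorial_succ, factorial_zero]
  push_cast
  field_simp

theorem B_add_two_two {n : ℕ} (hn : n ≠ 0) : B (n + 2) 2 = B n 0 - B n 2 := by
  have hmoment := sinMoment_one n
  rw [zero_pow hn, add_zero] at hmoment
  rw [B_zero, B_eq_sinMoment two_ne_zero (by omega), Nat.add_sub_cancel]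
  obtain rfl | ⟨c, rfl⟩ : n = 1 ∨ ∃ c, n = c + 2 := by
    rcases n with _ | _ | c <;> simp_all
  · simpa [B_eq_zero_of_lt] using hmoment
  · rw [B_eq_sinMoment two_ne_zero (by omega), Nat.add_sub_cancel]
    simp only [Nat.add_sub_cancel, factorial_succ] at hmoment ⊢
    push_cast at hmoment ⊢
    field_simp
    linear_combination hmoment

theorem sq_mul_B_add_three (a b : ℕ) :
    ((a : ℝ) + 2) ^ 2 * B (a + b + 3) (a + 3) =
      B (a + b + 1) (a + 1) - B (a + b + 1) (a + 3) := by
  have hmoment := sinMoment_add_two a b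
  rw [B_eq_sinMoment (by omega) (by omega), B_eq_sinMoment (by omega) (by omega),
    show a + b + 3 - (a + 3) = b by omega, show a + b + 1 - (a + 1) = b by omega,
    Nat.add_sub_cancel, show a + 3 - 1 = a + 2 by omega]
  obtain hb | ⟨c, rfl⟩ : b < 2 ∨ ∃ c, b = c + 2 := by
    rcases b with _ | _ | c <;> simp
  · rw [B_eq_zero_of_lt (by omega)]
    interval_cases b <;> simp [factorial_succ] at hmoment ⊢ <;> field_simp <;>
      linear_combination hmoment
  · rw [B_eq_sinMoment (by omega) (by omega), show a + 3 - 1 = a + 2 by omega,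
      show a + (c + 2) + 1 - (a + 3) = c by omega]
    simp only [Nat.add_sub_cancel, factorial_succ] at hmoment ⊢
    push_cast at hmoment ⊢
    field_simp
    linear_combination hmoment

theorem B_add_two_mul_sq {n m : ℕ} (hn : n ≠ 0) (hm : 2 ≤ m) (hmn : m ≤ n + 2) :
    B (n + 2) m * ((m - 1 : ℕ) : ℝ) ^ 2 = B n (m - 2) - B n m := by
  obtain rfl | ⟨a, rfl⟩ : m = 2 ∨ ∃ a, m = a + 3 := by
    rcases m with _ | _ | _ | a <;> simp_all
  · norm_num [B_add_two_two hn]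
  obtain ⟨b, rfl⟩ : ∃ b, n = a + b + 1 := ⟨n - a - 1, by omega⟩
  rw [show a + b + 1 + 2 = a + b + 3 by ring, show a + 3 - 2 = a + 1 by omega,
    ← sq_mul_B_add_three, show a + 3 - 1 = a + 2 by omega]
  push_cast
  ring

theorem Q_add_two (m : ℕ) : Q (m + 2) = Q m * (1 + C (((m + 1 : ℕ) : ℝ) ^ 2) * X ^ 2) := by
  have hindex : (Finset.Icc 1 (m + 2 - 1)).filter (fun j => j % 2 ≠ (m + 2) % 2)
      = insert (m + 1) ((Finset.Icc 1 (m - 1)).filter (fun j => j % 2 ≠ m % 2)) := by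
    ext j
    simp only [Finset.mem_insert, Finset.mem_filter, Finset.mem_Icc]
    omega
  rw [Q, Q, hindex, Finset.prod_insert (by simp), mul_comm]

theorem natDegree_Q_le (m : ℕ) : (Q m).natDegree ≤ m := by
  induction m using Nat.twoStepInduction with
  | zero => simp [Q]
  | one => simp [Q]
  | more m ih _ =>
    rw [Q_add_two]
    refine natDegree_mul_le.trans (_root_.add_le_add ih ?_)
    refine (natDegree_add_le _ _).trans (max_le (by simp) ?_)
    exact (natDegree_C_mul_le _ _).trans (by simp)

theorem A_eq_zero_of_lt {m j : ℕ} (h : m < j) : A m j = 0 :=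
  coeff_eq_zero_of_natDegree_lt ((natDegree_Q_le m).trans_lt h)

theorem A_zero_right (m : ℕ) : A m 0 = 1 := by
  simp [A, coeff_zero_eq_eval_zero, Q, eval_prod]

theorem A_add_two_sub (m j : ℕ) :
    A (m + 2) (j + 2) - A m (j + 2) = ((m + 1 : ℕ) : ℝ) ^ 2 * A m j := by
  rw [A, A, A, Q_add_two, mul_add, mul_one, coeff_add, add_sub_cancel_left, mul_left_comm,
    coeff_C_mul, coeff_mul_X_pow]

theorem sum_range_sub_mul_eq_sum_mul_sub {R : Type*} [Ring R] {f a : ℕ → R} {N : ℕ}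
    (hf : f 0 = 0) (ha : a N = 0) :
    ∑ s ∈ Finset.range N, (f (s + 1) - f s) * a s =
      ∑ s ∈ Finset.range N, f (s + 1) * (a s - a (s + 1)) := by
  have hshift := (Finset.sum_range_succ (fun s => f s * a s) N).symm.trans
    (Finset.sum_range_succ' (fun s => f s * a s) N)
  simp only [hf, ha, zero_mul, mul_zero, add_zero] at hshift
  simp only [sub_mul, mul_sub, Finset.sum_sub_distrib, hshift]

theorem sum_B_mul_sq_mul_A {j n : ℕ} (hn : 2 * j + 3 ≤ n) :
    ∑ s ∈ Finset.range ((n - (2 * j + 2)) / 2 + 1),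
        B n (n - 2 * s) * ((n - 2 * s - 1 : ℕ) : ℝ) ^ 2 * A (n - 2 * s - 2) (2 * j) =
      π ^ (n - (2 * j + 2)) / (n - (2 * j + 2))! := by
  induction j generalizing n with
  | zero =>
    obtain ⟨p, rfl⟩ : ∃ p, n = p + 2 := ⟨n - 2, by omega⟩
    simp only [Nat.mul_zero, Nat.zero_add, Nat.add_sub_cancel, A_zero_right, mul_one]
    have hterm : ∀ s ∈ Finset.range (p / 2 + 1),
        B (p + 2) (p + 2 - 2 * s) * ((p + 2 - 2 * s - 1 : ℕ) : ℝ) ^ 2 =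
          B p (p + 2 - 2 * (s + 1)) - B p (p + 2 - 2 * s) := by
      intro s hs
      rw [Finset.mem_range] at hs
      rw [B_add_two_mul_sq (by omega) (by omega) (by omega), Nat.sub_sub, mul_add, mul_one]
    rw [Finset.sum_congr rfl hterm, Finset.sum_range_sub (fun s => B p (p + 2 - 2 * s)),
      mul_zero, Nat.sub_zero, B_eq_zero_of_lt (m := p + 2) (by omega), sub_zero]
    obtain hpar | hpar := Nat.even_or_odd p
    · rw [show p + 2 - 2 * (p / 2 + 1) = 0 by rw [Nat.even_iff] at hpar; omega, B_zero]
    · rw [show p + 2 - 2 * (p / 2 + 1) = 1 by rw [Nat.odd_iff] at hpar; omega,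
        B_one (by omega), B_zero]
  | succ j ih =>
    obtain ⟨p, rfl⟩ : ∃ p, n = p + 2 := ⟨n - 2, by omega⟩
    rw [show p + 2 - (2 * (j + 1) + 2) = p - (2 * j + 2) by omega, ← ih (n := p) (by omega),
      show 2 * (j + 1) = 2 * j + 2 by ring]
    set N := (p - (2 * j + 2)) / 2 + 1
    have hterm : ∀ s ∈ Finset.range N,
        B (p + 2) (p + 2 - 2 * s) * ((p + 2 - 2 * s - 1 : ℕ) : ℝ) ^ 2
            * A (p + 2 - 2 * s - 2) (2 * j + 2) =
          (B p (p + 2 - 2 * (s + 1)) - B p (p + 2 - 2 * s))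
            * A (p + 2 - 2 * s - 2) (2 * j + 2) := by
      intro s hs
      rw [Finset.mem_range] at hs
      rw [B_add_two_mul_sq (by omega) (by omega) (by omega)]
      simp only [Nat.sub_sub, mul_add, mul_one]
    rw [Finset.sum_congr rfl hterm,
      sum_range_sub_mul_eq_sum_mul_sub (f := fun s => B p (p + 2 - 2 * s))
        (a := fun s => A (p + 2 - 2 * s - 2) (2 * j + 2))
        (B_eq_zero_of_lt (by omega)) (A_eq_zero_of_lt (by omega))]
    refine Finset.sum_congr rfl fun s hs => ?_
    rw [Finset.mem_range] at hs
    obtain ⟨m, hm⟩ : ∃ m, p - 2 * s = m + 2 := ⟨p - 2 * s - 2, by omega⟩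
    rw [show p + 2 - 2 * (s + 1) = m + 2 by omega, show p + 2 - 2 * s - 2 = m + 2 by omega,
      hm, Nat.add_sub_cancel, show m + 2 - 1 = m + 1 by omega, A_add_two_sub, mul_assoc]

theorem basic_combinatorial_identity_general (n k : ℕ) (hk : Even k) (hk2 : 2 ≤ k)
    (hkn : k ≤ n - 1) :
    ∑ s ∈ (Finset.range n).filter (fun s => k ≤ n - 2 * s),
        B n (n - 2 * s) * ((n - 2 * s - 1 : ℕ) : ℝ) ^ 2 * A (n - 2 * s - 2) (k - 2) =
      π ^ (n - k) / ((n - k).factorial : ℝ) := by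
  obtain ⟨j, rfl⟩ : ∃ j, k = 2 * j + 2 := by
    obtain ⟨t, rfl⟩ := hk
    exact ⟨t - 1, by omega⟩
  have hrange : (Finset.range n).filter (fun s => 2 * j + 2 ≤ n - 2 * s)
      = Finset.range ((n - (2 * j + 2)) / 2 + 1) := by
    ext s
    simp only [Finset.mem_filter, Finset.mem_range]
    omega
  rw [hrange, Nat.add_sub_cancel]
  exact sum_B_mul_sq_mul_A (by omega)

theorem basic_combinatorial_identity (n k : ℕ) (hk : Even k) (hk2 : 2 ≤ k)
    (hkn : k ≤ n - 1) (hn : 1 ≤ n) :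
    ∑ s ∈ (Finset.range n).filter (fun s => k ≤ n - 2 * s),
        B n (n - 2 * s) * ((n - 2 * s - 1 : ℕ) : ℝ) ^ 2 * A (n - 2 * s - 2) (k - 2) =
      π ^ (n - k) / ((n - k).factorial : ℝ) :=
  basic_combinatorial_identity_general n k hk hk2 hkn
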